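/- Let G be a stratified ground program with an EDB/IDB partition, and let Q be an IDB query atom that is finitely recursive on G. Then G bravely entails Q if and only if Magic(Q,G) bravely entails (the left copy of) Q, and G cautiously entails Q if and only if Magic(Q,G) cautiously entails (the left copy of) Q. -/

import Mathlib

/-- A ground ASP rule over a type `A` of ground atoms: a finite nonempty head,
a finite positive body and a finite negative body. -/
structure GroundRule (A : Type) : Type where
  head : Set A
  pos : Set A
  neg : Set A
  head_fin : head.Finite
  pos_fin : pos.Finite
  neg_fin : neg.Finite
  head_ne : head.Nonempty

/-- An interpretation `I` satisfies a ground rule. -/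
def GroundRule.satisfiedBy {A : Type} (I : Set A) (r : GroundRule A) : Prop :=
  r.pos ⊆ I ∧ r.neg ∩ I = ∅ → (r.head ∩ I).Nonempty

/-- `I` is a model of the ground program `G`. -/
def isModel {A : Type} (I : Set A) (G : Set (GroundRule A)) : Prop :=
  ∀ r ∈ G, r.satisfiedBy I

/-- The rule obtained by deleting the negative body. -/
def GroundRule.reduce {A : Type} (r : GroundRule A) : GroundRule A :=
  ⟨r.head, r.pos, ∅, r.head_fin, r.pos_fin, Set.finite_empty, r.head_ne⟩

/-- The reduct `G^I`. -/
def reduct {A : Type} (G : Set (GroundRule A)) (I : Set A) : Set (GroundRule A) :=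
  {g | ∃ r ∈ G, r.neg ∩ I = ∅ ∧ g = r.reduce}

/-- `M` is a stable model of `G`: a ⊆-minimal model of the reduct `G^M`. -/
def isStableModel {A : Type} (G : Set (GroundRule A)) (M : Set A) : Prop :=
  isModel M (reduct G M) ∧ ∀ N ⊆ M, isModel N (reduct G M) → N = M

/-- Brave entailment: `Q` is in some stable model. -/
def braveEnt {A : Type} (G : Set (GroundRule A)) (Q : A) : Prop :=
  ∃ M, isStableModel G M ∧ Q ∈ M

/-- Cautious entailment: `Q` is in every stable model. -/
def cautiousEnt {A : Type} (G : Set (GroundRule A)) (Q : A) : Prop :=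
  ∀ M, isStableModel G M → Q ∈ M

/-- `X` is an unfounded set for `G` w.r.t. `I`. -/
def isUnfounded {A : Type} (G : Set (GroundRule A)) (I X : Set A) : Prop :=
  ∀ r ∈ G, (r.head ∩ X).Nonempty →
    ¬ r.pos ⊆ I ∨ (r.neg ∩ I).Nonempty ∨ (r.pos ∩ X).Nonempty ∨
      (r.head ∩ (I \ X)).Nonempty

/-- `G` is stratified: it admits a level mapping. -/
def isStratified {A : Type} (G : Set (GroundRule A)) : Prop :=
  ∃ lv : A → ℕ, ∀ r ∈ G, ∀ h ∈ r.head,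
    (∀ b ∈ r.pos, lv b ≤ lv h) ∧ (∀ b ∈ r.neg, lv b < lv h)

/-- The set `R(Q,G)` of atoms relevant for `Q` in `G` (the least set containing `Q`
and closed under rules whose head intersects it). -/
def relevantFor {A : Type} (G : Set (GroundRule A)) (Q : A) : Set A :=
  ⋂₀ {R : Set A | Q ∈ R ∧ ∀ r ∈ G, (r.head ∩ R).Nonempty → r.head ∪ r.pos ∪ r.neg ⊆ R}

/-- `Q` is finitely recursive on `G`. -/
def finitelyRecursive {A : Type} (G : Set (GroundRule A)) (Q : A) : Prop :=
  (relevantFor G Q).Finite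

/-- A fact: a singleton head and empty bodies. -/
def GroundRule.isFact {A : Type} (r : GroundRule A) : Prop :=
  (∃ a, r.head = {a}) ∧ r.pos = ∅ ∧ r.neg = ∅

/-- The fact with head `{a}`. -/
def factRule {A : Type} (a : A) : GroundRule A :=
  ⟨{a}, ∅, ∅, Set.finite_singleton a, Set.finite_empty, Set.finite_empty,
    Set.singleton_nonempty a⟩

/-- An EDB/IDB partition of a ground program: `idb` and `edb` are disjoint and
every rule of `edb` is a fact. -/
def isPartition {A : Type} (idb edb : Set (GroundRule A)) : Prop :=
  Disjoint idb edb ∧ ∀ r ∈ edb, r.isFact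

/-- `a` is an IDB atom: it occurs in the head of some IDB rule. -/
def isIDBAtom {A : Type} (idb : Set (GroundRule A)) (a : A) : Prop :=
  ∃ r ∈ idb, a ∈ r.head
/-- The magic rule `m(q) :- m(p)` (magic atoms live in the right copy of `A ⊕ A`). -/
def magicRule {A : Type} (q p : A) : GroundRule (A ⊕ A) :=
  ⟨{Sum.inr q}, {Sum.inr p}, ∅, Set.finite_singleton _, Set.finite_singleton _,
    Set.finite_empty, Set.singleton_nonempty _⟩

/-- The modified rule obtained from `r`: the head (left copies), the positive body
augmented with the magic atoms of all head atoms, and the negative body. -/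
def modifiedRule {A : Type} (r : GroundRule A) : GroundRule (A ⊕ A) :=
  ⟨Sum.inl '' r.head, Sum.inl '' r.pos ∪ Sum.inr '' r.head, Sum.inl '' r.neg,
    r.head_fin.image _, (r.pos_fin.image _).union (r.head_fin.image _),
    r.neg_fin.image _, r.head_ne.image _⟩

/-- Renaming the atoms of a rule along a function. -/
def GroundRule.map {A B : Type} (f : A → B) (r : GroundRule A) : GroundRule B :=
  ⟨f '' r.head, f '' r.pos, f '' r.neg, r.head_fin.image _, r.pos_fin.image _,
    r.neg_fin.image _, r.head_ne.image _⟩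

/-- The magic subprogram: the seed fact `m(Q).` together with all magic rules. -/
def magicSub {A : Type} (idb : Set (GroundRule A)) (Q : A) : Set (GroundRule (A ⊕ A)) :=
  {factRule (Sum.inr Q)} ∪
    {g | ∃ r ∈ idb, ∃ p ∈ r.head, ∃ q ∈ (r.head ∪ r.pos ∪ r.neg) \ {p},
      isIDBAtom idb q ∧ g = magicRule q p}

/-- The magic transform `Magic(Q,G)` of the program `G = idb ∪ edb`:
the seed fact, the magic rules, the modified rules and the EDB facts. -/
def magicProg {A : Type} (idb edb : Set (GroundRule A)) (Q : A) :
    Set (GroundRule (A ⊕ A)) :=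
  magicSub idb Q ∪ {g | ∃ r ∈ idb, g = modifiedRule r} ∪ GroundRule.map Sum.inl '' edb

/-- The least model of a program (the intersection of all its models);
for a definite program this is its least model. -/
def leastModel {A : Type} (G : Set (GroundRule A)) : Set A :=
  ⋂₀ {I | isModel I G}

/-- `M*`: the least model of the magic subprogram. -/
def Mstar {A : Type} (idb : Set (GroundRule A)) (Q : A) : Set (A ⊕ A) :=
  leastModel (magicSub idb Q)

/-- The killed atoms w.r.t. `N`: atoms (of the left copy) that are false in `N` and
are EDB atoms or whose magic atom is true in `N`. -/
def killed {A : Type} (idb : Set (GroundRule A)) (N : Set (A ⊕ A)) : Set A :=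
  {a | Sum.inl a ∉ N ∧ (¬ isIDBAtom idb a ∨ Sum.inr a ∈ N)}

/-- The magic variant of an interpretation `I`: the heads of the EDB facts,
`M*`, and the left copies of the atoms of `I` whose magic atom is in `M*`. -/
def magicVariant {A : Type} (idb edb : Set (GroundRule A)) (Q : A) (I : Set A) :
    Set (A ⊕ A) :=
  (⋃ r ∈ edb, Sum.inl '' r.head) ∪ Mstar idb Q ∪
    {x | ∃ a ∈ I, Sum.inr a ∈ Mstar idb Q ∧ x = Sum.inl a}

/-!
Two stratified programs that share their rules with heads meeting a splitting set `U` have stable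
models with the same traces `M ∩ U`. The trace of a stable model is a stable model of the shared
bottom part; conversely a stable model `Mb` of the bottom extends, because the remaining rules
together with the facts `Mb` form a stratified program, and stratified programs have stable models.
These are built level by level, choosing at each level a minimal model by Zorn's lemma (heads are
finite, so a chain of models intersects to a model).

`R(Q,G)` is a splitting set, and every rule of `G` whose head meets it stays active in `Magic(Q,G)`
once the magic atoms are evaluated in the least model `M*` of the magic rules. The stable models of
`Magic(Q,G)` are exactly the sets `inl '' M ∪ M*` for the stable models `M` of the active rules.
-/

open Set

section Reduct

variable {A : Type}

theorem GroundRule.satisfiedBy_reduce {I : Set A} {r : GroundRule A} :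
    r.reduce.satisfiedBy I ↔ (r.pos ⊆ I → (r.head ∩ I).Nonempty) := by
  simp [GroundRule.satisfiedBy, GroundRule.reduce]

theorem isModel_reduct_iff {I M : Set A} {G : Set (GroundRule A)} :
    isModel I (reduct G M) ↔
      ∀ r ∈ G, r.neg ∩ M = ∅ → r.pos ⊆ I → (r.head ∩ I).Nonempty := by
  constructor
  · intro h r hr hneg
    exact GroundRule.satisfiedBy_reduce.1 (h _ ⟨r, hr, hneg, rfl⟩)
  · rintro h _ ⟨r, hr, hneg, rfl⟩
    exact GroundRule.satisfiedBy_reduce.2 (h r hr hneg)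

theorem neg_eq_empty_of_mem_reduct {G : Set (GroundRule A)} {M : Set A} {r : GroundRule A}
    (hr : r ∈ reduct G M) : r.neg = ∅ := by
  obtain ⟨r, -, -, rfl⟩ := hr
  rfl

theorem isModel_univ (G : Set (GroundRule A)) : isModel univ G := fun r _ _ ↦
  r.head_ne.mono (subset_inter Subset.rfl (subset_univ _))

theorem isStableModel.head_inter_nonempty {G : Set (GroundRule A)} {M : Set A}
    (hM : isStableModel G M) {r : GroundRule A} (hr : r ∈ G) (hneg : r.neg ∩ M = ∅)
    (hpos : r.pos ⊆ M) : (r.head ∩ M).Nonempty :=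
  isModel_reduct_iff.1 hM.1 r hr hneg hpos

theorem isStableModel.subset_of_forall_head_subset {G : Set (GroundRule A)} {M U : Set A}
    (hM : isStableModel G M) (hU : ∀ r ∈ G, r.head ⊆ U) : M ⊆ U := by
  have hmod : isModel (M ∩ U) (reduct G M) := isModel_reduct_iff.2 fun r hr hneg hpos ↦ by
    obtain ⟨a, ha, haM⟩ := hM.head_inter_nonempty hr hneg (hpos.trans inter_subset_left)
    exact ⟨a, ha, haM, hU r hr ha⟩
  rw [← hM.2 _ inter_subset_left hmod]
  exact inter_subset_right

end Reduct

section MinimalModel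

variable {A : Type} {P : Set (GroundRule A)}

theorem isModel_sInter_of_isChain (hP : ∀ r ∈ P, r.neg = ∅) {c : Set (Set A)}
    (hchain : IsChain (· ⊆ ·) c) (hne : c.Nonempty) (hc : ∀ I ∈ c, isModel I P) :
    isModel (⋂₀ c) P := by
  rintro r hr ⟨hpos, -⟩
  by_contra hempty
  -- the models missing the various head atoms are finitely many, so one of them misses them all
  have hcover : (r.head_fin.toFinset : Set A) ⊆ ⋃ I ∈ c, Iᶜ := by
    intro a ha
    have ha : a ∈ r.head := by simpa using ha
    have : a ∉ ⋂₀ c := fun haI ↦ hempty ⟨a, ha, haI⟩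
    simpa [mem_sInter] using this
  have hdir : DirectedOn (fun I J : Set A ↦ Iᶜ ⊆ Jᶜ) c := fun I hI J hJ ↦ by
    rcases hchain.total hI hJ with h | h
    · exact ⟨I, hI, subset_rfl, compl_subset_compl.2 h⟩
    · exact ⟨J, hJ, compl_subset_compl.2 h, subset_rfl⟩
  obtain ⟨I, hI, hsub⟩ := hdir.exists_mem_subset_of_finset_subset_biUnion hne hcover
  have hnegI : r.neg ∩ I = ∅ := by rw [hP r hr, empty_inter]
  obtain ⟨a, ha, haI⟩ := hc I hI r hr ⟨hpos.trans (sInter_subset_of_mem hI), hnegI⟩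
  exact hsub (by simpa using ha) haI

theorem exists_minimal_model_between (hP : ∀ r ∈ P, r.neg = ∅) {B I : Set A} (hBI : B ⊆ I)
    (hI : isModel I P) : ∃ J ⊆ I, Minimal (fun N ↦ B ⊆ N ∧ isModel N P) J :=
  zorn_superset_nonempty {N | B ⊆ N ∧ isModel N P}
    (fun c hcS hchain hne ↦ ⟨⋂₀ c,
      ⟨subset_sInter fun _ hN ↦ (hcS hN).1,
        isModel_sInter_of_isChain hP hchain hne fun _ hN ↦ (hcS hN).2⟩,
      fun _ ↦ sInter_subset_of_mem⟩) I ⟨hBI, hI⟩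

end MinimalModel

section Stratified

variable {A : Type} {G : Set (GroundRule A)} {lv : A → ℕ}

def IsLevelMapping (G : Set (GroundRule A)) (lv : A → ℕ) : Prop :=
  ∀ r ∈ G, ∀ h ∈ r.head, (∀ b ∈ r.pos, lv b ≤ lv h) ∧ (∀ b ∈ r.neg, lv b < lv h)

theorem IsLevelMapping.head_inter_nonempty_or (hlv : IsLevelMapping G lv) {r : GroundRule A}
    (hr : r ∈ G) (n : ℕ) :
    (r.head ∩ {a | n < lv a}).Nonempty ∨ (∀ b ∈ r.pos, lv b ≤ n) ∧ (∀ b ∈ r.neg, lv b < n) := by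
  by_cases hhigh : (r.head ∩ {a | n < lv a}).Nonempty
  · exact Or.inl hhigh
  · obtain ⟨h, hh⟩ := r.head_ne
    have hle : lv h ≤ n := not_lt.1 fun hlt ↦ hhigh ⟨h, hh, hlt⟩
    exact Or.inr ⟨fun b hb ↦ ((hlv r hr h hh).1 b hb).trans hle,
      fun b hb ↦ ((hlv r hr h hh).2 b hb).trans_le hle⟩

def IsLevelStep (G : Set (GroundRule A)) (lv : A → ℕ) (n : ℕ) (J J' : Set A) : Prop :=
  J' ⊆ J ∧
    Minimal (fun N ↦ {a ∈ J | lv a < n} ∪ {a | n < lv a} ⊆ N ∧ isModel N (reduct G J)) J'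

theorem exists_isLevelStep {n : ℕ} {J : Set A} (hJn : {a | n ≤ lv a} ⊆ J)
    (hJ : isModel J (reduct G J)) : ∃ J', IsLevelStep G lv n J J' :=
  exists_minimal_model_between (fun _ ↦ neg_eq_empty_of_mem_reduct)
    (union_subset (sep_subset _ _) fun _ (ha : n < _) ↦ hJn ha.le) hJ

namespace IsLevelStep

variable {n : ℕ} {J J' : Set A}

theorem above_subset (h : IsLevelStep G lv n J J') : {a | n + 1 ≤ lv a} ⊆ J' :=
  fun _ ha ↦ h.2.1.1 (Or.inr ha)

theorem mem_iff_of_lt (h : IsLevelStep G lv n J J') {a : A} (ha : lv a < n) : a ∈ J' ↔ a ∈ J :=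
  ⟨fun haJ' ↦ h.1 haJ', fun haJ ↦ h.2.1.1 (Or.inl ⟨haJ, ha⟩)⟩

theorem isModel_reduct (hlv : IsLevelMapping G lv) (h : IsLevelStep G lv n J J') :
    isModel J' (reduct G J') := by
  refine isModel_reduct_iff.2 fun r hr hneg hpos ↦ ?_
  rcases hlv.head_inter_nonempty_or hr n with ⟨a, ha, hahigh⟩ | ⟨-, hnegn⟩
  · exact ⟨a, ha, h.2.1.1 (Or.inr hahigh)⟩
  · refine isModel_reduct_iff.1 h.2.1.2 r hr ?_ hpos
    refine eq_empty_of_forall_notMem fun b ⟨hb, hbJ⟩ ↦ ?_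
    exact hneg.subset ⟨hb, (h.mem_iff_of_lt (hnegn b hb)).2 hbJ⟩

end IsLevelStep

def IsLevelSequence (G : Set (GroundRule A)) (lv : A → ℕ) (J : ℕ → Set A) : Prop :=
  J 0 = univ ∧ ∀ n, IsLevelStep G lv n (J n) (J (n + 1))

namespace IsLevelSequence

variable {J : ℕ → Set A}

theorem mem_iff_of_lt_of_le (hJ : IsLevelSequence G lv J) {a : A} {m k : ℕ} (ham : lv a < m)
    (hmk : m ≤ k) : a ∈ J k ↔ a ∈ J m := by
  induction k, hmk using Nat.le_induction with
  | base => rfl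
  | succ k hmk ih => exact ((hJ.2 k).mem_iff_of_lt (ham.trans_le hmk)).trans ih

theorem mem_of_le (hJ : IsLevelSequence G lv J) {a : A} {k : ℕ} (hk : k ≤ lv a) : a ∈ J k := by
  cases k with
  | zero => exact hJ.1 ▸ mem_univ a
  | succ k => exact (hJ.2 k).above_subset hk

theorem mem_iInter_iff_of_lt (hJ : IsLevelSequence G lv J) {a : A} {n : ℕ} (han : lv a < n) :
    a ∈ ⋂ k, J k ↔ a ∈ J n := by
  refine ⟨fun ha ↦ mem_iInter.1 ha n, fun haJ ↦ mem_iInter.2 fun k ↦ ?_⟩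
  rcases le_or_gt k (lv a) with hk | hk
  · exact hJ.mem_of_le hk
  · exact (hJ.mem_iff_of_lt_of_le (Nat.lt_succ_self _) hk).2
      ((hJ.mem_iff_of_lt_of_le (Nat.lt_succ_self _) han).1 haJ)

theorem isModel_reduct_iInter (hlv : IsLevelMapping G lv) (hJ : IsLevelSequence G lv J) :
    isModel (⋂ k, J k) (reduct G (⋂ k, J k)) := by
  refine isModel_reduct_iff.2 fun r hr hneg hpos ↦ ?_
  obtain ⟨h, hh, hmax⟩ := exists_max_image r.head lv r.head_fin r.head_ne
  rcases hlv.head_inter_nonempty_or hr (lv h) with ⟨a, ha, hlt⟩ | ⟨-, hnegn⟩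
  · exact absurd (hmax a ha) (not_le.2 hlt)
  have hnegJ : r.neg ∩ J (lv h) = ∅ := eq_empty_of_forall_notMem fun b ⟨hb, hbJ⟩ ↦
    hneg.subset ⟨hb, (hJ.mem_iInter_iff_of_lt (hnegn b hb)).2 hbJ⟩
  obtain ⟨a, ha, haJ⟩ :=
    isModel_reduct_iff.1 (hJ.2 (lv h)).2.1.2 r hr hnegJ (hpos.trans (iInter_subset _ _))
  exact ⟨a, ha, (hJ.mem_iInter_iff_of_lt (Nat.lt_succ_of_le (hmax a ha))).2 haJ⟩

theorem mem_of_isModel_reduct_iInter (hlv : IsLevelMapping G lv) (hJ : IsLevelSequence G lv J)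
    {N : Set A} (hN : N ⊆ ⋂ k, J k) (hNmod : isModel N (reduct G (⋂ k, J k))) :
    ∀ n, ∀ a ∈ J n, lv a < n → a ∈ N := by
  intro n
  induction n with
  | zero => exact fun a _ ha ↦ absurd ha (Nat.not_lt_zero _)
  | succ n ih =>
    -- cutting the level-`n` atoms of `J (n + 1)` down to those in `N` still gives a model of
    -- `G^(J n)`, so by minimality nothing is cut
    have hmod : isModel (({a ∈ J n | lv a < n} ∪ {a | n < lv a}) ∪ (N ∩ J (n + 1)))
        (reduct G (J n)) := isModel_reduct_iff.2 fun r hr hneg hpos ↦ by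
      rcases hlv.head_inter_nonempty_or hr n with ⟨a, ha, hahigh⟩ | ⟨hposn, -⟩
      · exact ⟨a, ha, Or.inl (Or.inr hahigh)⟩
      have hposN : r.pos ⊆ N := fun p hp ↦ by
        rcases hpos hp with (⟨hpJ, hpn⟩ | hpn) | ⟨hpN, -⟩
        · exact ih p hpJ hpn
        · exact absurd (hposn p hp) (not_le.2 hpn)
        · exact hpN
      have hnegN : r.neg ∩ ⋂ k, J k = ∅ :=
        eq_empty_of_subset_empty (hneg ▸ inter_subset_inter_right _ (iInter_subset _ _))
      obtain ⟨a, ha, haN⟩ := isModel_reduct_iff.1 hNmod r hr hnegN hposN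
      exact ⟨a, ha, Or.inr ⟨haN, iInter_subset _ (n + 1) (hN haN)⟩⟩
    have heq := (hJ.2 n).2.eq_of_le ⟨subset_union_left, hmod⟩
      (union_subset (hJ.2 n).2.1.1 inter_subset_right)
    intro a ha han
    rw [← heq] at ha
    rcases ha with (⟨haJ, han'⟩ | hahigh) | ⟨haN, -⟩
    · exact ih a haJ han'
    · exact absurd han (not_lt.2 hahigh)
    · exact haN

theorem isStableModel_iInter (hlv : IsLevelMapping G lv) (hJ : IsLevelSequence G lv J) :
    isStableModel G (⋂ k, J k) := by
  refine ⟨hJ.isModel_reduct_iInter hlv, fun N hN hNmod ↦ hN.antisymm fun a ha ↦ ?_⟩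
  exact hJ.mem_of_isModel_reduct_iInter hlv hN hNmod _ a (mem_iInter.1 ha _) (Nat.lt_succ_self _)

end IsLevelSequence

theorem isStratified.mono {P : Set (GroundRule A)} (hG : isStratified G) (hPG : P ⊆ G) :
    isStratified P :=
  let ⟨lv, hlv⟩ := hG
  ⟨lv, fun r hr ↦ hlv r (hPG hr)⟩

theorem isStratified.exists_isStableModel (h : isStratified G) : ∃ M, isStableModel G M := by
  obtain ⟨lv, hlv⟩ := h
  choose! next hnext using fun n (J : Set A) (hJ : {a | n ≤ lv a} ⊆ J ∧ isModel J (reduct G J)) ↦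
    exists_isLevelStep (G := G) hJ.1 hJ.2
  let J : ℕ → Set A := fun n ↦ Nat.rec univ next n
  have hinv : ∀ n, {a | n ≤ lv a} ⊆ J n ∧ isModel (J n) (reduct G (J n)) := by
    intro n
    induction n with
    | zero => exact ⟨subset_univ _, isModel_univ _⟩
    | succ n ih => exact ⟨(hnext n (J n) ih).above_subset, (hnext n (J n) ih).isModel_reduct hlv⟩
  exact ⟨_, IsLevelSequence.isStableModel_iInter hlv ⟨rfl, fun n ↦ hnext n (J n) (hinv n)⟩⟩

end Stratified

section Splitting

variable {A : Type} {G : Set (GroundRule A)} {U : Set A}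

def IsSplittingSet (G : Set (GroundRule A)) (U : Set A) : Prop :=
  ∀ r ∈ G, (r.head ∩ U).Nonempty → r.head ∪ r.pos ∪ r.neg ⊆ U

def splitBottom (G : Set (GroundRule A)) (U : Set A) : Set (GroundRule A) :=
  {r ∈ G | (r.head ∩ U).Nonempty}

namespace IsSplittingSet

variable {r : GroundRule A}

theorem mono {P : Set (GroundRule A)} (hU : IsSplittingSet G U) (hPG : P ⊆ G) :
    IsSplittingSet P U :=
  fun r hr ↦ hU r (hPG hr)

theorem head_subset (hU : IsSplittingSet G U) (hr : r ∈ splitBottom G U) : r.head ⊆ U :=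
  fun _ ha ↦ hU r hr.1 hr.2 (Or.inl (Or.inl ha))

theorem pos_subset (hU : IsSplittingSet G U) (hr : r ∈ splitBottom G U) : r.pos ⊆ U :=
  fun _ ha ↦ hU r hr.1 hr.2 (Or.inl (Or.inr ha))

theorem neg_inter_eq_empty_iff (hU : IsSplittingSet G U) (hr : r ∈ splitBottom G U)
    {M : Set A} : r.neg ∩ (M ∩ U) = ∅ ↔ r.neg ∩ M = ∅ := by
  have hneg : r.neg ⊆ U := fun _ ha ↦ hU r hr.1 hr.2 (Or.inr ha)
  rw [inter_comm M U, ← inter_assoc, inter_eq_left.2 hneg]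

theorem isModel_inter_reduct_splitBottom (hU : IsSplittingSet G U) {I J : Set A}
    (hI : isModel I (reduct G J)) : isModel (I ∩ U) (reduct (splitBottom G U) (J ∩ U)) := by
  refine isModel_reduct_iff.2 fun r hr hneg hpos ↦ ?_
  obtain ⟨a, ha, haI⟩ := isModel_reduct_iff.1 hI r hr.1 ((hU.neg_inter_eq_empty_iff hr).1 hneg)
    (hpos.trans inter_subset_left)
  exact ⟨a, ha, haI, hU.head_subset hr ha⟩

end IsSplittingSet

theorem isStableModel.inter_splitBottom (hU : IsSplittingSet G U) {M : Set A}
    (hM : isStableModel G M) : isStableModel (splitBottom G U) (M ∩ U) := by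
  refine ⟨hU.isModel_inter_reduct_splitBottom hM.1, fun N hN hNmod ↦ ?_⟩
  have hNM : N ∪ (M \ U) ⊆ M := union_subset (hN.trans inter_subset_left) sdiff_subset
  have hmod : isModel (N ∪ (M \ U)) (reduct G M) := isModel_reduct_iff.2 fun r hr hneg hpos ↦ by
    by_cases hrU : (r.head ∩ U).Nonempty
    · have hposN : r.pos ⊆ N := fun p hp ↦
        (hpos hp).resolve_right fun h ↦ h.2 (hU.pos_subset ⟨hr, hrU⟩ hp)
      obtain ⟨a, ha, haN⟩ := isModel_reduct_iff.1 hNmod r ⟨hr, hrU⟩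
        ((hU.neg_inter_eq_empty_iff ⟨hr, hrU⟩).2 hneg) hposN
      exact ⟨a, ha, Or.inl haN⟩
    · obtain ⟨a, ha, haM⟩ := hM.head_inter_nonempty hr hneg (hpos.trans hNM)
      exact ⟨a, ha, Or.inr ⟨haM, fun haU ↦ hrU ⟨a, ha, haU⟩⟩⟩
  have heq := hM.2 _ hNM hmod
  refine hN.antisymm fun a ⟨haM, haU⟩ ↦ ?_
  rw [← heq] at haM
  exact haM.resolve_right fun h ↦ h.2 haU

theorem exists_isStableModel_inter_eq (hU : IsSplittingSet G U) (hG : isStratified G)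
    {Mb : Set A} (hMb : isStableModel (splitBottom G U) Mb) :
    ∃ M, isStableModel G M ∧ M ∩ U = Mb := by
  set T := factRule '' Mb ∪ {r ∈ G | ¬(r.head ∩ U).Nonempty}
  have hT : isStratified T := by
    obtain ⟨lv, hlv⟩ := hG
    refine ⟨lv, ?_⟩
    rintro r (⟨a, -, rfl⟩ | ⟨hr, -⟩)
    · exact fun _ _ ↦ ⟨fun _ h ↦ h.elim, fun _ h ↦ h.elim⟩
    · exact hlv r hr
  obtain ⟨M, hM⟩ := hT.exists_isStableModel
  have hMbM : Mb ⊆ M := fun a ha ↦ by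
    obtain ⟨b, hb, hbM⟩ :=
      hM.head_inter_nonempty (Or.inl ⟨a, ha, rfl⟩) (empty_inter _) (empty_subset _)
    rwa [← mem_singleton_iff.1 hb]
  have hMbU : Mb ⊆ U := hMb.subset_of_forall_head_subset fun _ hr ↦ hU.head_subset hr
  have hMU : M ∩ U = Mb := by
    have hM' : M ⊆ Mb ∪ Uᶜ := hM.subset_of_forall_head_subset <| by
      rintro r (⟨a, ha, rfl⟩ | ⟨-, hrU⟩)
      · exact singleton_subset_iff.2 (Or.inl ha)
      · exact fun a ha ↦ Or.inr fun haU ↦ hrU ⟨a, ha, haU⟩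
    exact subset_antisymm (fun a ⟨haM, haU⟩ ↦ (hM' haM).resolve_right (not_not.2 haU))
      (subset_inter hMbM hMbU)
  refine ⟨M, ⟨isModel_reduct_iff.2 fun r hr hneg hpos ↦ ?_, fun N hN hNmod ↦ ?_⟩, hMU⟩
  · by_cases hrU : (r.head ∩ U).Nonempty
    · have hrb : r ∈ splitBottom G U := ⟨hr, hrU⟩
      refine (hMb.head_inter_nonempty hrb ?_ ?_).mono (inter_subset_inter_right _ hMbM)
      · rwa [← hMU, hU.neg_inter_eq_empty_iff hrb]
      · exact hMU ▸ subset_inter hpos (hU.pos_subset hrb)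
    · exact hM.head_inter_nonempty (Or.inr ⟨hr, hrU⟩) hneg hpos
  · have hNU : N ∩ U = Mb := by
      refine hMb.2 _ (hMU ▸ inter_subset_inter_left U hN) ?_
      simpa only [hMU] using hU.isModel_inter_reduct_splitBottom hNmod
    refine hM.2 N hN (isModel_reduct_iff.2 fun r hr hneg hpos ↦ ?_)
    rcases hr with ⟨a, ha, rfl⟩ | ⟨hr, -⟩
    · exact ⟨a, rfl, (hNU ▸ ha : a ∈ N ∩ U).1⟩
    · exact isModel_reduct_iff.1 hNmod r hr hneg hpos

end Splitting

section Correspondence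

def StableCorrespondence {A B : Type} (G₁ : Set (GroundRule A)) (q₁ : A)
    (G₂ : Set (GroundRule B)) (q₂ : B) : Prop :=
  (∀ M₁, isStableModel G₁ M₁ → ∃ M₂, isStableModel G₂ M₂ ∧ (q₂ ∈ M₂ ↔ q₁ ∈ M₁)) ∧
    ∀ M₂, isStableModel G₂ M₂ → ∃ M₁, isStableModel G₁ M₁ ∧ (q₁ ∈ M₁ ↔ q₂ ∈ M₂)

namespace StableCorrespondence

variable {A B C : Type} {G₁ : Set (GroundRule A)} {G₂ : Set (GroundRule B)}
  {G₃ : Set (GroundRule C)} {q₁ : A} {q₂ : B} {q₃ : C}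

theorem trans (h₁₂ : StableCorrespondence G₁ q₁ G₂ q₂)
    (h₂₃ : StableCorrespondence G₂ q₂ G₃ q₃) : StableCorrespondence G₁ q₁ G₃ q₃ := by
  constructor
  · intro M₁ hM₁
    obtain ⟨M₂, hM₂, h₂⟩ := h₁₂.1 M₁ hM₁
    obtain ⟨M₃, hM₃, h₃⟩ := h₂₃.1 M₂ hM₂
    exact ⟨M₃, hM₃, h₃.trans h₂⟩
  · intro M₃ hM₃
    obtain ⟨M₂, hM₂, h₂⟩ := h₂₃.2 M₃ hM₃
    obtain ⟨M₁, hM₁, h₁⟩ := h₁₂.2 M₂ hM₂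
    exact ⟨M₁, hM₁, h₁.trans h₂⟩

theorem braveEnt_iff (h : StableCorrespondence G₁ q₁ G₂ q₂) :
    braveEnt G₁ q₁ ↔ braveEnt G₂ q₂ := by
  constructor
  · rintro ⟨M₁, hM₁, hq⟩
    obtain ⟨M₂, hM₂, hiff⟩ := h.1 M₁ hM₁
    exact ⟨M₂, hM₂, hiff.2 hq⟩
  · rintro ⟨M₂, hM₂, hq⟩
    obtain ⟨M₁, hM₁, hiff⟩ := h.2 M₂ hM₂
    exact ⟨M₁, hM₁, hiff.2 hq⟩

theorem cautiousEnt_iff (h : StableCorrespondence G₁ q₁ G₂ q₂) :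
    cautiousEnt G₁ q₁ ↔ cautiousEnt G₂ q₂ := by
  constructor
  · intro hq M₂ hM₂
    obtain ⟨M₁, hM₁, hiff⟩ := h.2 M₂ hM₂
    exact hiff.1 (hq M₁ hM₁)
  · intro hq M₁ hM₁
    obtain ⟨M₂, hM₂, hiff⟩ := h.1 M₁ hM₁
    exact hiff.1 (hq M₂ hM₂)

end StableCorrespondence

theorem stableCorrespondence_of_splitBottom_eq {A : Type} {G₁ G₂ : Set (GroundRule A)}
    {U : Set A} {q : A} (hU₁ : IsSplittingSet G₁ U) (hU₂ : IsSplittingSet G₂ U)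
    (hG₁ : isStratified G₁) (hG₂ : isStratified G₂) (hbot : splitBottom G₁ U = splitBottom G₂ U)
    (hq : q ∈ U) : StableCorrespondence G₁ q G₂ q := by
  have hmem : ∀ {M M' : Set A}, M' ∩ U = M ∩ U → (q ∈ M' ↔ q ∈ M) := fun h ↦ by
    simpa [hq] using congrArg (q ∈ ·) h
  constructor
  · intro M hM
    obtain ⟨M', hM', h⟩ := exists_isStableModel_inter_eq hU₂ hG₂ (hbot ▸ hM.inter_splitBottom hU₁)
    exact ⟨M', hM', hmem h⟩
  · intro M hM
    obtain ⟨M', hM', h⟩ := exists_isStableModel_inter_eq hU₁ hG₁ (hbot ▸ hM.inter_splitBottom hU₂)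
    exact ⟨M', hM', hmem h⟩

end Correspondence

section Relevance

variable {A : Type} {G : Set (GroundRule A)} {Q : A}

theorem mem_relevantFor_self : Q ∈ relevantFor G Q :=
  mem_sInter.2 fun _ hR ↦ hR.1

theorem isSplittingSet_relevantFor : IsSplittingSet G (relevantFor G Q) := by
  rintro r hr ⟨h, hh, hhR⟩ a ha
  exact mem_sInter.2 fun R hR ↦ hR.2 r hr ⟨h, hh, mem_sInter.1 hhR R hR⟩ ha

theorem relevantFor_subset {R : Set A} (hQ : Q ∈ R) (hR : IsSplittingSet G R) :
    relevantFor G Q ⊆ R :=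
  sInter_subset_of_mem ⟨hQ, hR⟩

end Relevance

section LeastModel

variable {A : Type}

def GroundRule.IsDefinite (r : GroundRule A) : Prop :=
  r.head.Subsingleton ∧ r.neg = ∅

theorem isModel_leastModel {G : Set (GroundRule A)} (hG : ∀ r ∈ G, r.IsDefinite) :
    isModel (leastModel G) G := by
  rintro r hr ⟨hpos, -⟩
  obtain ⟨a, ha⟩ := r.head_ne
  refine ⟨a, ha, mem_sInter.2 fun I hI ↦ ?_⟩
  have hnegI : r.neg ∩ I = ∅ := by rw [(hG r hr).2, empty_inter]
  obtain ⟨b, hb, hbI⟩ := hI r hr ⟨hpos.trans (sInter_subset_of_mem hI), hnegI⟩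
  rwa [(hG r hr).1 ha hb]

theorem leastModel_subset {G : Set (GroundRule A)} {I : Set A} (hI : isModel I G) :
    leastModel G ⊆ I :=
  sInter_subset_of_mem hI

end LeastModel

section Magic

variable {A : Type} {idb edb : Set (GroundRule A)} {Q : A}

theorem isDefinite_of_mem_magicSub {r : GroundRule (A ⊕ A)} (hr : r ∈ magicSub idb Q) :
    r.IsDefinite := by
  rcases hr with rfl | ⟨_, _, _, _, _, _, _, rfl⟩
  · exact ⟨subsingleton_singleton, rfl⟩
  · exact ⟨subsingleton_singleton, rfl⟩

theorem isModel_Mstar : isModel (Mstar idb Q) (magicSub idb Q) :=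
  isModel_leastModel fun _ ↦ isDefinite_of_mem_magicSub

theorem inr_mem_Mstar_self : Sum.inr Q ∈ Mstar idb Q := by
  obtain ⟨x, hx, hxM⟩ :=
    isModel_Mstar (idb := idb) (Q := Q) _ (Or.inl rfl) ⟨empty_subset _, empty_inter _⟩
  rwa [mem_singleton_iff.1 hx] at hxM

theorem inr_mem_Mstar_of_mem_rule {r : GroundRule A} (hr : r ∈ idb) {p : A} (hp : p ∈ r.head)
    (hpM : Sum.inr p ∈ Mstar idb Q) {q : A} (hq : q ∈ r.head ∪ r.pos ∪ r.neg)
    (hqidb : isIDBAtom idb q) : Sum.inr q ∈ Mstar idb Q := by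
  rcases eq_or_ne q p with rfl | hqp
  · exact hpM
  obtain ⟨x, hx, hxM⟩ := isModel_Mstar (magicRule q p)
    (Or.inr ⟨r, hr, p, hp, q, ⟨hq, hqp⟩, hqidb, rfl⟩) ⟨singleton_subset_iff.2 hpM, empty_inter _⟩
  rwa [mem_singleton_iff.1 hx] at hxM

theorem inl_notMem_Mstar (a : A) : Sum.inl a ∉ Mstar idb Q := by
  have hinr : Mstar idb Q ⊆ range Sum.inr := leastModel_subset <| by
    rintro r (rfl | ⟨_, _, _, _, q, _, _, rfl⟩) -
    · exact ⟨_, rfl, Q, rfl⟩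
    · exact ⟨_, rfl, q, rfl⟩
  rintro ha
  obtain ⟨b, hb⟩ := hinr ha
  exact Sum.inr_ne_inl hb

theorem Mstar_subset_of_isModel_reduct {I N : Set (A ⊕ A)}
    (hI : isModel I (reduct (magicProg idb edb Q) N)) : Mstar idb Q ⊆ I :=
  leastModel_subset fun r hr ⟨hpos, _⟩ ↦ isModel_reduct_iff.1 hI r (Or.inl (Or.inl hr))
    (by rw [(isDefinite_of_mem_magicSub hr).2, empty_inter]) hpos

/-- The rules of `idb ∪ edb` that stay active in `Magic(Q, G)` once its magic atoms are
evaluated in `M*`. -/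
def activatedProgram (idb edb : Set (GroundRule A)) (Q : A) : Set (GroundRule A) :=
  {r ∈ idb | ∀ p ∈ r.head, Sum.inr p ∈ Mstar idb Q} ∪ edb

def magicLift (idb : Set (GroundRule A)) (Q : A) (M : Set A) : Set (A ⊕ A) :=
  Sum.inl '' M ∪ Mstar idb Q

theorem preimage_inl_magicLift (M : Set A) : Sum.inl ⁻¹' magicLift idb Q M = M := by
  ext a
  simp [magicLift, inl_notMem_Mstar]

theorem inr_mem_magicLift {M : Set A} {a : A} :
    Sum.inr a ∈ magicLift idb Q M ↔ Sum.inr a ∈ Mstar idb Q := by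
  simp [magicLift]

theorem isModel_preimage_inl_reduct {I N : Set (A ⊕ A)}
    (hI : isModel I (reduct (magicProg idb edb Q) N)) :
    isModel (Sum.inl ⁻¹' I) (reduct (activatedProgram idb edb Q) (Sum.inl ⁻¹' N)) := by
  have hMI := Mstar_subset_of_isModel_reduct hI
  refine isModel_reduct_iff.2 fun r hr hneg hpos ↦ ?_
  have hneg' : Sum.inl '' r.neg ∩ N = ∅ := by rwa [← image_inter_preimage, image_eq_empty]
  rw [← image_inter_nonempty_iff]
  rcases hr with ⟨hr, hact⟩ | hr
  · exact isModel_reduct_iff.1 hI (modifiedRule r) (Or.inl (Or.inr ⟨r, hr, rfl⟩)) hneg'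
      (union_subset (image_subset_iff.2 hpos) (image_subset_iff.2 fun p hp ↦ hMI (hact p hp)))
  · exact isModel_reduct_iff.1 hI (r.map Sum.inl) (Or.inr ⟨r, hr, rfl⟩) hneg'
      (image_subset_iff.2 hpos)

theorem isModel_magicLift_reduct {I : Set A} {N : Set (A ⊕ A)}
    (hI : isModel I (reduct (activatedProgram idb edb Q) (Sum.inl ⁻¹' N))) :
    isModel (magicLift idb Q I) (reduct (magicProg idb edb Q) N) := by
  refine isModel_reduct_iff.2 fun r hr hneg hpos ↦ ?_
  rcases hr with ((rfl | ⟨r₀, hr₀, p, hp, q, ⟨hq, -⟩, hqidb, rfl⟩) | ⟨r, hr, rfl⟩) | ⟨r, hr, rfl⟩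
  · exact ⟨_, rfl, Or.inr inr_mem_Mstar_self⟩
  · exact ⟨_, rfl, Or.inr (inr_mem_Mstar_of_mem_rule hr₀ hp
      (inr_mem_magicLift.1 (hpos rfl)) hq hqidb)⟩
  all_goals
    have hneg' : r.neg ∩ Sum.inl ⁻¹' N = ∅ := by rwa [← image_eq_empty, image_inter_preimage]
    rw [← preimage_inl_magicLift (idb := idb) (Q := Q) I] at hI
    refine image_inter_nonempty_iff.2 ?_
  · exact isModel_reduct_iff.1 hI r (Or.inl ⟨hr, fun p hp ↦ inr_mem_magicLift.1
      (hpos (Or.inr ⟨p, hp, rfl⟩))⟩) hneg' (image_subset_iff.1 (subset_union_left.trans hpos))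
  · exact isModel_reduct_iff.1 hI r (Or.inr hr) hneg' (image_subset_iff.1 hpos)

theorem isStableModel_magicLift {M : Set A} (hM : isStableModel (activatedProgram idb edb Q) M) :
    isStableModel (magicProg idb edb Q) (magicLift idb Q M) := by
  have hpre := preimage_inl_magicLift (idb := idb) (Q := Q) M
  refine ⟨isModel_magicLift_reduct (by rw [hpre]; exact hM.1), fun N hN hNmod ↦ hN.antisymm ?_⟩
  have hNM : Sum.inl ⁻¹' N = M :=
    hM.2 _ (hpre ▸ preimage_mono hN) (hpre ▸ isModel_preimage_inl_reduct hNmod)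
  exact union_subset (hNM ▸ image_preimage_subset _ _) (Mstar_subset_of_isModel_reduct hNmod)

theorem isStableModel.preimage_inl {N : Set (A ⊕ A)} (hN : isStableModel (magicProg idb edb Q) N) :
    isStableModel (activatedProgram idb edb Q) (Sum.inl ⁻¹' N) := by
  have hmod := isModel_preimage_inl_reduct hN.1
  have hlift : magicLift idb Q (Sum.inl ⁻¹' N) = N :=
    hN.2 _ (union_subset (image_preimage_subset _ _) (Mstar_subset_of_isModel_reduct hN.1))
      (isModel_magicLift_reduct hmod)
  refine ⟨hmod, fun M hM hMmod ↦ ?_⟩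
  have hMN := hN.2 _ (hlift ▸ union_subset_union_left _ (image_mono hM))
    (isModel_magicLift_reduct hMmod)
  rw [← preimage_inl_magicLift (idb := idb) (Q := Q) M, hMN]

theorem stableCorrespondence_activatedProgram_magicProg :
    StableCorrespondence (activatedProgram idb edb Q) Q (magicProg idb edb Q) (Sum.inl Q) :=
  ⟨fun _ hM ↦ ⟨_, isStableModel_magicLift hM, by rw [← mem_preimage, preimage_inl_magicLift]⟩,
    fun _ hN ↦ ⟨_, hN.preimage_inl, Iff.rfl⟩⟩

theorem activatedProgram_subset : activatedProgram idb edb Q ⊆ idb ∪ edb :=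
  union_subset_union_left _ (sep_subset _ _)

theorem inr_mem_Mstar_of_mem_relevantFor (hfacts : ∀ r ∈ edb, r.isFact) {a : A}
    (ha : a ∈ relevantFor (idb ∪ edb) Q) (haidb : isIDBAtom idb a) : Sum.inr a ∈ Mstar idb Q := by
  refine relevantFor_subset (R := {a | isIDBAtom idb a → Sum.inr a ∈ Mstar idb Q})
    (fun _ ↦ inr_mem_Mstar_self) ?_ ha haidb
  rintro r (hr | hr) ⟨h, hh, hhM⟩ a ha
  · exact inr_mem_Mstar_of_mem_rule hr hh (hhM ⟨r, hr, hh⟩) ha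
  · obtain ⟨⟨b, hb⟩, hpos, hneg⟩ := hfacts r hr
    simp only [hb, hpos, hneg, union_empty, mem_singleton_iff] at ha hh
    rwa [ha, ← hh]

theorem splitBottom_activatedProgram (hfacts : ∀ r ∈ edb, r.isFact) :
    splitBottom (activatedProgram idb edb Q) (relevantFor (idb ∪ edb) Q) =
      splitBottom (idb ∪ edb) (relevantFor (idb ∪ edb) Q) := by
  ext r
  refine ⟨fun ⟨hr, hrU⟩ ↦ ⟨activatedProgram_subset hr, hrU⟩, fun ⟨hr, hrU⟩ ↦ ⟨?_, hrU⟩⟩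
  rcases hr with hr | hr
  · obtain ⟨h, hh, hhU⟩ := hrU
    have hhM := inr_mem_Mstar_of_mem_relevantFor hfacts hhU ⟨r, hr, hh⟩
    exact Or.inl ⟨hr, fun p hp ↦
      inr_mem_Mstar_of_mem_rule hr hh hhM (Or.inl (Or.inl hp)) ⟨r, hr, hp⟩⟩
  · exact Or.inr hr

theorem stableCorrespondence_activatedProgram (hfacts : ∀ r ∈ edb, r.isFact)
    (hG : isStratified (idb ∪ edb)) :
    StableCorrespondence (idb ∪ edb) Q (activatedProgram idb edb Q) Q :=
  stableCorrespondence_of_splitBottom_eq isSplittingSet_relevantFor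
    (isSplittingSet_relevantFor.mono activatedProgram_subset) hG (hG.mono activatedProgram_subset)
    (splitBottom_activatedProgram hfacts).symm mem_relevantFor_self

end Magic

theorem magic_query_equivalence_general {A : Type} (idb edb : Set (GroundRule A)) (Q : A)
    (hpart : isPartition idb edb) (hstrat : isStratified (idb ∪ edb)) :
    (braveEnt (idb ∪ edb) Q ↔ braveEnt (magicProg idb edb Q) (Sum.inl Q)) ∧
      (cautiousEnt (idb ∪ edb) Q ↔ cautiousEnt (magicProg idb edb Q) (Sum.inl Q)) := by
  have h : StableCorrespondence (idb ∪ edb) Q (magicProg idb edb Q) (Sum.inl Q) :=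
    (stableCorrespondence_activatedProgram hpart.2 hstrat).trans
      stableCorrespondence_activatedProgram_magicProg
  exact ⟨h.braveEnt_iff, h.cautiousEnt_iff⟩

/-- Query equivalence of the magic set transformation: `G = idb ∪ edb` bravely
(resp. cautiously) entails `Q` iff `Magic(Q,G)` bravely (resp. cautiously)
entails the left copy of `Q`. -/
theorem magic_query_equivalence {A : Type} (idb edb : Set (GroundRule A)) (Q : A)
    (hpart : isPartition idb edb) (hstrat : isStratified (idb ∪ edb))
    (hQ : isIDBAtom idb Q) (hfr : finitelyRecursive (idb ∪ edb) Q) :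
    (braveEnt (idb ∪ edb) Q ↔ braveEnt (magicProg idb edb Q) (Sum.inl Q)) ∧
      (cautiousEnt (idb ∪ edb) Q ↔ cautiousEnt (magicProg idb edb Q) (Sum.inl Q)) :=
  magic_query_equivalence_general idb edb Q hpart hstrat
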